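/- arXiv:math/9404234 — 2 statements merged into one kernel-verified Lean document; each statement's English description precedes it below -/
import Mathlib

section
/- Every convex block basis of a strongly summing sequence is strongly summing. -/
open Filter Topology

section Defs
variable (𝕜 : Type*) [RCLike 𝕜] {B : Type*} [NormedAddCommGroup B] [NormedSpace 𝕜 B]

/-- A sequence is weak-Cauchy if every continuous linear functional converges along it. -/
def WeakCauchy (x : ℕ → B) : Prop :=
  ∀ f : B →L[𝕜] 𝕜, ∃ l : 𝕜, Tendsto (fun n => f (x n)) atTop (𝓝 l)

/-- A sequence converges weakly. -/
def WeaklyConvergent (x : ℕ → B) : Prop :=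
  ∃ b : B, ∀ f : B →L[𝕜] 𝕜, Tendsto (fun n => f (x n)) atTop (𝓝 (f b))

/-- A basic sequence: nonzero terms with uniformly bounded basis projections. -/
def IsBasicSeq (x : ℕ → B) : Prop :=
  (∀ j, x j ≠ 0) ∧ ∃ Λ : ℝ, ∀ (c : ℕ → 𝕜) (k n : ℕ), k ≤ n →
    ‖∑ i ∈ Finset.range k, c i • x i‖ ≤ Λ * ‖∑ i ∈ Finset.range n, c i • x i‖

/-- Strongly summing (s.s.) sequence. -/
def StronglySumming (b : ℕ → B) : Prop :=
  WeakCauchy 𝕜 b ∧ IsBasicSeq 𝕜 b ∧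
    ∀ c : ℕ → 𝕜, (∃ M : ℝ, ∀ n, ‖∑ j ∈ Finset.range n, c j • b j‖ ≤ M) →
      ∃ l : 𝕜, Tendsto (fun n => ∑ j ∈ Finset.range n, c j) atTop (𝓝 l)

/-- Coefficient converging (c.c.) sequence. -/
def CoeffConverging (e : ℕ → B) : Prop :=
  IsBasicSeq 𝕜 e ∧ WeakCauchy 𝕜 (fun n => ∑ j ∈ Finset.range (n + 1), e j) ∧
    ∀ c : ℕ → 𝕜, (∃ M : ℝ, ∀ n, ‖∑ j ∈ Finset.range n, c j • e j‖ ≤ M) →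
      ∃ l : 𝕜, Tendsto c atTop (𝓝 l)

/-- `u` is a convex block basis of `b`. -/
def ConvexBlockBasis (b u : ℕ → B) : Prop :=
  ∃ (n : ℕ → ℕ) (c : ℕ → ℝ), StrictMono n ∧ (∀ i, 0 ≤ c i) ∧
    (∀ j, ∑ i ∈ Finset.Ioc (n j) (n (j + 1)), c i = 1) ∧
    ∀ j, u j = ∑ i ∈ Finset.Ioc (n j) (n (j + 1)), (c i : 𝕜) • b i

/-- `u` is equivalent to the summing basis of the space `Se` of convergent series,
whose norm of a finitely supported sequence `a` is `max_{k ≤ n} ‖∑_{i<k} a i‖`. -/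
def EquivSummingBasis (u : ℕ → B) : Prop :=
  ∃ A C : ℝ, 0 < A ∧ ∀ (n : ℕ) (a : ℕ → 𝕜),
    (∀ k ≤ n, A * ‖∑ i ∈ Finset.range k, a i‖ ≤ ‖∑ i ∈ Finset.range n, a i • u i‖) ∧
    ∃ k ≤ n, ‖∑ i ∈ Finset.range n, a i • u i‖ ≤ C * ‖∑ i ∈ Finset.range k, a i‖

/-- `x` is equivalent to the standard unit vector basis of `ℓ¹`. -/
def EquivL1Basis (x : ℕ → B) : Prop :=
  ∃ c C : ℝ, 0 < c ∧ ∀ (n : ℕ) (a : ℕ → 𝕜),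
    c * ∑ i ∈ Finset.range n, ‖a i‖ ≤ ‖∑ i ∈ Finset.range n, a i • x i‖ ∧
    ‖∑ i ∈ Finset.range n, a i • x i‖ ≤ C * ∑ i ∈ Finset.range n, ‖a i‖

end Defs

section Defs2
variable (𝕜 : Type*) [RCLike 𝕜] (B : Type*) [NormedAddCommGroup B] [NormedSpace 𝕜 B]

/-- Every weak-Cauchy sequence converges weakly. -/
def WeaklySeqComplete : Prop :=
  ∀ x : ℕ → B, WeakCauchy 𝕜 x → WeaklyConvergent 𝕜 x

/-- `c₀` (realized as `C₀(ℕ, 𝕜)`) embeds isomorphically into `B`. -/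
def ContainsC0 : Prop :=
  ∃ T : ZeroAtInftyContinuousMap ℕ 𝕜 →L[𝕜] B, ∃ c : ℝ, 0 < c ∧
    ∀ x, c * ‖x‖ ≤ ‖T x‖

end Defs2

/-!
Write `u j = ∑_{i ∈ (n j, n (j + 1)]} c i • b i`. Then `∑_{j < k} a j • u j` is the partial sum up to
`n k` of `∑ d i • b i`, where `d i = a j * c i` on the `j`-th block, and `∑_{i ≤ n k} d i = ∑_{j < k} a j`
because each block of weights sums to `1`. Hence the basis projections of `u` are among those of `b`,
bounded partial sums of `∑ a j • u j` give (through the basis constant of `b`) bounded partial sums of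
`∑ d i • b i`, and convergence of `∑ d i` along `n k + 1` is convergence of `∑ a j`. Finally, `f (u j)` is a
convex combination of the `f (b i)` with `i > n j`, and balls are convex, so `u` is weak-Cauchy with the
same limits as `b`.
-/

/-- The coefficients, with respect to `b`, of `∑ a j • u j` when `u j = ∑_{i ∈ (n j, n (j + 1)]} c i • b i`:
the `i`-th one is `a j * c i` for the unique block `j` containing `i`. -/
def blockCoeff {R : Type*} [Semiring R] (n : ℕ → ℕ) (c a : ℕ → R) (i : ℕ) : R :=
  ∑ j ∈ Finset.range i, if i ∈ Finset.Ioc (n j) (n (j + 1)) then a j * c i else 0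

section BlockCoeff

variable {R M : Type*} [Semiring R] [AddCommMonoid M] [Module R M] {n : ℕ → ℕ} {c a : ℕ → R}

lemma blockCoeff_eq_zero_of_le (hn : Monotone n) {i : ℕ} (hi : i ≤ n 0) :
    blockCoeff n c a i = 0 := by
  refine Finset.sum_eq_zero fun j _ => if_neg fun hij => ?_
  exact absurd ((Finset.mem_Ioc.mp hij).1.trans_le' (hn (Nat.zero_le j))) hi.not_gt

lemma blockCoeff_of_mem_Ioc (hn : StrictMono n) {i j : ℕ}
    (hi : i ∈ Finset.Ioc (n j) (n (j + 1))) : blockCoeff n c a i = a j * c i := by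
  obtain ⟨hji, hij⟩ := Finset.mem_Ioc.mp hi
  rw [blockCoeff, Finset.sum_eq_single_of_mem j
    (Finset.mem_range.mpr (hn.le_apply.trans_lt hji)), if_pos hi]
  intro k _ hkj
  refine if_neg fun hik => ?_
  obtain ⟨hki, hik⟩ := Finset.mem_Ioc.mp hik
  rcases lt_or_gt_of_ne hkj with hlt | hlt
  · exact (hik.trans (hn.monotone hlt)).not_gt hji
  · exact (hij.trans (hn.monotone hlt)).not_gt hki

lemma sum_range_blockCoeff_smul (hn : StrictMono n) (v : ℕ → M) (k : ℕ) :
    ∑ i ∈ Finset.range (n k + 1), blockCoeff n c a i • v i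
      = ∑ j ∈ Finset.range k, a j • ∑ i ∈ Finset.Ioc (n j) (n (j + 1)), c i • v i := by
  induction k with
  | zero =>
    exact Finset.sum_eq_zero fun i hi => by
      rw [blockCoeff_eq_zero_of_le hn.monotone (Nat.lt_succ_iff.mp (Finset.mem_range.mp hi)),
        zero_smul]
  | succ k ih =>
    have hsplit : Finset.range (n (k + 1) + 1)
        = Finset.range (n k + 1) ∪ Finset.Ioc (n k) (n (k + 1)) := by
      ext i
      simp only [Finset.mem_union, Finset.mem_range, Finset.mem_Ioc]
      have := hn (lt_add_one k)
      omega
    rw [hsplit, Finset.sum_union (Finset.disjoint_left.mpr fun i hi hi' => by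
        simp only [Finset.mem_range, Finset.mem_Ioc] at hi hi'; omega),
      ih, Finset.sum_range_succ, Finset.smul_sum]
    congr 1
    exact Finset.sum_congr rfl fun i hi => by rw [blockCoeff_of_mem_Ioc hn hi, smul_smul]

end BlockCoeff

lemma tendsto_sum_Ioc_smul_of_tendsto {E : Type*} [NormedAddCommGroup E] [NormedSpace ℝ E]
    {s : ℕ → E} {l : E} (hs : Tendsto s atTop (𝓝 l)) {n : ℕ → ℕ} (hn : Tendsto n atTop atTop)
    {c : ℕ → ℝ} (hc0 : ∀ i, 0 ≤ c i) (hc1 : ∀ j, ∑ i ∈ Finset.Ioc (n j) (n (j + 1)), c i = 1) :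
    Tendsto (fun j => ∑ i ∈ Finset.Ioc (n j) (n (j + 1)), c i • s i) atTop (𝓝 l) := by
  refine Metric.nhds_basis_ball.tendsto_right_iff.mpr fun ε hε => ?_
  obtain ⟨N, hN⟩ := eventually_atTop.mp (Metric.nhds_basis_ball.tendsto_right_iff.mp hs ε hε)
  filter_upwards [tendsto_atTop.mp hn N] with j hj
  exact (convex_ball l ε).sum_mem (fun i _ => hc0 i) (hc1 j)
    fun i hi => hN i (hj.trans (Finset.mem_Ioc.mp hi).1.le)

def BoundedSumsSummable (𝕜 : Type*) [RCLike 𝕜] {B : Type*} [NormedAddCommGroup B]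
    [NormedSpace 𝕜 B] (b : ℕ → B) : Prop :=
  ∀ c : ℕ → 𝕜, (∃ M : ℝ, ∀ n, ‖∑ j ∈ Finset.range n, c j • b j‖ ≤ M) →
    ∃ l : 𝕜, Tendsto (fun n => ∑ j ∈ Finset.range n, c j) atTop (𝓝 l)

section BasicSequence

variable {𝕜 : Type*} [RCLike 𝕜] {B : Type*} [NormedAddCommGroup B] [NormedSpace 𝕜 B]
  {x : ℕ → B}

lemma IsBasicSeq.exists_nonneg_bound (hx : IsBasicSeq 𝕜 x) :
    ∃ Λ : ℝ, 0 ≤ Λ ∧ ∀ (c : ℕ → 𝕜) (k n : ℕ), k ≤ n →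
      ‖∑ i ∈ Finset.range k, c i • x i‖ ≤ Λ * ‖∑ i ∈ Finset.range n, c i • x i‖ := by
  obtain ⟨-, Λ, hΛ⟩ := hx
  exact ⟨max Λ 0, le_max_right _ _, fun c k n hkn =>
    (hΛ c k n hkn).trans (mul_le_mul_of_nonneg_right (le_max_left _ _) (norm_nonneg _))⟩

lemma IsBasicSeq.eq_zero_of_sum_eq_zero (hx : IsBasicSeq 𝕜 x) {c : ℕ → 𝕜} {N : ℕ}
    (h : ∑ i ∈ Finset.range N, c i • x i = 0) {i : ℕ} (hi : i < N) : c i = 0 := by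
  obtain ⟨hx0, Λ, hΛ⟩ := hx
  have hpartial : ∀ k ≤ N, ∑ i ∈ Finset.range k, c i • x i = 0 := fun k hk =>
    norm_le_zero_iff.mp (by simpa [h] using hΛ c k N hk)
  have hterm : c i • x i = 0 := by
    simpa [Finset.sum_range_succ, hpartial i hi.le] using hpartial (i + 1) hi
  exact (smul_eq_zero.mp hterm).resolve_right (hx0 i)

end BasicSequence

section ConvexBlockBasis

variable {𝕜 : Type*} [RCLike 𝕜] {B : Type*} [NormedAddCommGroup B] [NormedSpace 𝕜 B]
  {b u : ℕ → B} {n : ℕ → ℕ} {c : ℕ → ℝ}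

lemma sum_smul_eq_sum_blockCoeff_smul (hn : StrictMono n)
    (hu : ∀ j, u j = ∑ i ∈ Finset.Ioc (n j) (n (j + 1)), (c i : 𝕜) • b i) (a : ℕ → 𝕜) (k : ℕ) :
    ∑ j ∈ Finset.range k, a j • u j
      = ∑ i ∈ Finset.range (n k + 1), blockCoeff n (fun i => (c i : 𝕜)) a i • b i := by
  simp only [hu, sum_range_blockCoeff_smul hn]

lemma sum_blockCoeff (hn : StrictMono n) (hc1 : ∀ j, ∑ i ∈ Finset.Ioc (n j) (n (j + 1)), c i = 1)
    (a : ℕ → 𝕜) (k : ℕ) :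
    ∑ i ∈ Finset.range (n k + 1), blockCoeff n (fun i => (c i : 𝕜)) a i
      = ∑ j ∈ Finset.range k, a j := by
  simpa [← RCLike.ofReal_sum, hc1] using sum_range_blockCoeff_smul (M := 𝕜) (c := fun i => (c i : 𝕜)) (a := a) hn (fun _ => 1) k

lemma WeakCauchy.of_convexBlocks (hb : WeakCauchy 𝕜 b) (hn : StrictMono n) (hc0 : ∀ i, 0 ≤ c i)
    (hc1 : ∀ j, ∑ i ∈ Finset.Ioc (n j) (n (j + 1)), c i = 1)
    (hu : ∀ j, u j = ∑ i ∈ Finset.Ioc (n j) (n (j + 1)), (c i : 𝕜) • b i) : WeakCauchy 𝕜 u := by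
  intro f
  obtain ⟨l, hl⟩ := hb f
  refine ⟨l, (tendsto_sum_Ioc_smul_of_tendsto hl hn.tendsto_atTop hc0 hc1).congr fun j => ?_⟩
  simp [hu, RCLike.real_smul_eq_coe_mul]

lemma IsBasicSeq.of_blocks (hb : IsBasicSeq 𝕜 b) (hn : StrictMono n)
    (hc1 : ∀ j, ∑ i ∈ Finset.Ioc (n j) (n (j + 1)), c i = 1)
    (hu : ∀ j, u j = ∑ i ∈ Finset.Ioc (n j) (n (j + 1)), (c i : 𝕜) • b i) : IsBasicSeq 𝕜 u := by
  obtain ⟨Λ, -, hΛ⟩ := hb.exists_nonneg_bound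
  refine ⟨fun j huj => ?_, Λ, fun a k m hkm => ?_⟩
  · -- writing `u j` as `∑_{j' ≤ j} δ_{j j'} u j'`, its `b`-coefficients are the `c i` of block `j`
    have hsum : ∑ j' ∈ Finset.range (j + 1), (Pi.single j 1 : ℕ → 𝕜) j' • u j' = 0 := by
      rw [Finset.sum_eq_single_of_mem j (Finset.self_mem_range_succ j) fun j' _ hj' => by simp [hj'],
        huj, smul_zero]
    rw [sum_smul_eq_sum_blockCoeff_smul hn hu] at hsum
    have hc : ∀ i ∈ Finset.Ioc (n j) (n (j + 1)), c i = 0 := fun i hi => by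
      have := hb.eq_zero_of_sum_eq_zero hsum (Nat.lt_succ_of_le (Finset.mem_Ioc.mp hi).2)
      simpa [blockCoeff_of_mem_Ioc hn hi] using this
    simpa [Finset.sum_eq_zero hc] using hc1 j
  · simpa only [sum_smul_eq_sum_blockCoeff_smul hn hu] using
      hΛ _ (n k + 1) (n m + 1) (Nat.succ_le_succ (hn.monotone hkm))

lemma BoundedSumsSummable.of_blocks (hs : BoundedSumsSummable 𝕜 b) (hb : IsBasicSeq 𝕜 b)
    (hn : StrictMono n) (hc1 : ∀ j, ∑ i ∈ Finset.Ioc (n j) (n (j + 1)), c i = 1)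
    (hu : ∀ j, u j = ∑ i ∈ Finset.Ioc (n j) (n (j + 1)), (c i : 𝕜) • b i) :
    BoundedSumsSummable 𝕜 u := by
  rintro a ⟨M, hM⟩
  obtain ⟨Λ, hΛ0, hΛ⟩ := hb.exists_nonneg_bound
  have hbounded : ∀ N, ‖∑ i ∈ Finset.range N, blockCoeff n (fun i => (c i : 𝕜)) a i • b i‖
      ≤ Λ * M := fun N => by
    refine (hΛ _ N (n N + 1) (Nat.le_succ_of_le hn.le_apply)).trans ?_
    rw [← sum_smul_eq_sum_blockCoeff_smul hn hu]
    exact mul_le_mul_of_nonneg_left (hM N) hΛ0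
  obtain ⟨l, hl⟩ := hs _ ⟨Λ * M, hbounded⟩
  exact ⟨l, (hl.comp ((tendsto_add_atTop_nat 1).comp hn.tendsto_atTop)).congr
    (sum_blockCoeff hn hc1 a)⟩

end ConvexBlockBasis

theorem convexBlockBasis_stronglySumming_general {𝕜 : Type*} [RCLike 𝕜] {B : Type*}
    [NormedAddCommGroup B] [NormedSpace 𝕜 B] (b u : ℕ → B)
    (hss : StronglySumming 𝕜 b) (hcb : ConvexBlockBasis 𝕜 b u) :
    StronglySumming 𝕜 u := by
  obtain ⟨hwc, hbasic, hsum⟩ := hss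
  obtain ⟨n, c, hn, hc0, hc1, hu⟩ := hcb
  exact ⟨hwc.of_convexBlocks hn hc0 hc1 hu, hbasic.of_blocks hn hc1 hu,
    BoundedSumsSummable.of_blocks hsum hbasic hn hc1 hu⟩

/-- Every convex block basis of a strongly summing sequence is strongly summing. -/
theorem convexBlockBasis_stronglySumming {𝕜 : Type*} [RCLike 𝕜] {B : Type*}
    [NormedAddCommGroup B] [NormedSpace 𝕜 B] [CompleteSpace B] (b u : ℕ → B)
    (hss : StronglySumming 𝕜 b) (hcb : ConvexBlockBasis 𝕜 b u) :
    StronglySumming 𝕜 u :=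
  convexBlockBasis_stronglySumming_general b u hss hcb
end

section
/- A basic sequence (b_j) in a Banach space is strongly summing if and only if its sequence of biorthogonal functionals (b_j^*) in [b_j]^* is coefficient converging. -/
open Filter Topology

/-
The basis projections `P k = ∑_{i<k} b_i^* ⊗ b_i` are bounded by density, and
`f ∘ P n = ∑_{i<n} f(b_i) b_i^*`. Hence a functional `f ∈ X^*` gives a bounded `b^*`-expansion
with coefficients `f(b_i)`, and `F ∈ X^{**}` a bounded `b`-expansion with coefficients `F(b_i^*)`.
Conversely, by weak* compactness a bounded `b^*`-expansion (resp. `b`-expansion) with coefficients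
`c_j` comes from some `φ ∈ X^*` with `φ(b_j) = c_j` (resp. `F ∈ X^{**}` with `F(b_j^*) = c_j`).
Under this dictionary, convergence of `∑ c_j` for `b` and of `c_j` for `b^*` are the same
statement about weak-Cauchy sequences.
-/

theorem exists_dual_eq_of_tendsto_of_norm_le {𝕜 E : Type*} [NontriviallyNormedField 𝕜]
    [ProperSpace 𝕜] [SeminormedAddCommGroup E] [NormedSpace 𝕜 E]
    {g : ℕ → StrongDual 𝕜 E} {M : ℝ} (hg : ∀ n, ‖g n‖ ≤ M) :
    ∃ φ : StrongDual 𝕜 E, ∀ x y, Tendsto (fun n => g n x) atTop (𝓝 y) → φ x = y := by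
  have hball : map (StrongDual.toWeakDual ∘ g) atTop ≤
      𝓟 (WeakDual.toStrongDual ⁻¹' Metric.closedBall 0 M) :=
    le_principal_iff.mpr <| mem_map.mpr <| Eventually.of_forall fun n => by simpa using hg n
  obtain ⟨φ, -, hφ⟩ :=
    (WeakDual.isCompact_closedBall (0 : StrongDual 𝕜 E) M).exists_mapClusterPt hball
  refine ⟨WeakDual.toStrongDual φ, fun x y hy => ?_⟩
  have hx : MapClusterPt (φ x) atTop fun n => g n x :=
    hφ.continuousAt_comp (WeakDual.eval_continuous x).continuousAt
  exact eq_of_nhds_neBot (hx.clusterPt.mono hy)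

theorem exists_eq_sum_range_of_mem_span_range {𝕜 E : Type*} [Semiring 𝕜] [AddCommMonoid E]
    [Module 𝕜 E] {b : ℕ → E} {x : E} (hx : x ∈ Submodule.span 𝕜 (Set.range b)) :
    ∃ (a : ℕ → 𝕜) (N : ℕ), ∀ m, N ≤ m → x = ∑ i ∈ Finset.range m, a i • b i := by
  obtain ⟨a, rfl⟩ := Finsupp.mem_span_range_iff_exists_finsupp.mp hx
  refine ⟨a, a.support.sup id + 1, fun m hm => Finset.sum_subset (fun i hi => ?_) fun i _ hi => ?_⟩
  · have : i ≤ a.support.sup id := Finset.le_sup (f := id) hi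
    exact Finset.mem_range.mpr (by omega)
  · simp [Finsupp.notMem_support_iff.mp hi]

section Biorthogonal

variable {𝕜 : Type*} [RCLike 𝕜] {X : Type*} [NormedAddCommGroup X] [NormedSpace 𝕜 X]
  {b : ℕ → X} {bstar : ℕ → X →L[𝕜] 𝕜}

theorem biorthogonal_apply_sum_smul (hbi : ∀ i j, bstar j (b i) = if i = j then 1 else 0)
    (a : ℕ → 𝕜) (m j : ℕ) :
    bstar j (∑ i ∈ Finset.range m, a i • b i) = if j < m then a j else 0 := by
  simp only [map_sum, map_smul, hbi, smul_eq_mul, mul_ite, mul_one, mul_zero,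
    Finset.sum_ite_eq', Finset.mem_range]

theorem sum_smul_biorthogonal_apply (hbi : ∀ i j, bstar j (b i) = if i = j then 1 else 0)
    (c : ℕ → 𝕜) (n j : ℕ) :
    (∑ i ∈ Finset.range n, c i • bstar i) (b j) = if j < n then c j else 0 := by
  simp only [sum_apply, smul_apply, hbi, smul_eq_mul,
    mul_ite, mul_one, mul_zero, Finset.sum_ite_eq, Finset.mem_range]

variable (b bstar) in
def basisProj (k : ℕ) : X →L[𝕜] X :=
  ∑ i ∈ Finset.range k, (bstar i).smulRight (b i)

theorem basisProj_apply (k : ℕ) (x : X) :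
    basisProj b bstar k x = ∑ i ∈ Finset.range k, bstar i x • b i := by
  simp [basisProj]

theorem exists_norm_basisProj_le (hb : IsBasicSeq 𝕜 b)
    (hdense : Dense (Submodule.span 𝕜 (Set.range b) : Set X))
    (hbi : ∀ i j, bstar j (b i) = if i = j then 1 else 0) :
    ∃ C, ∀ k, ‖basisProj b bstar k‖ ≤ C := by
  obtain ⟨-, Λ, hΛ⟩ := hb
  have hspan : ∀ k, ∀ x ∈ Submodule.span 𝕜 (Set.range b), ‖basisProj b bstar k x‖ ≤ Λ * ‖x‖ := by
    intro k x hx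
    obtain ⟨a, N, hxa⟩ := exists_eq_sum_range_of_mem_span_range hx
    have hPx : basisProj b bstar k x = ∑ i ∈ Finset.range k, a i • b i := by
      rw [basisProj_apply]
      refine Finset.sum_congr rfl fun i hi => ?_
      rw [hxa (max N (i + 1)) (le_max_left _ _), biorthogonal_apply_sum_smul hbi,
        if_pos (by omega)]
    rw [hPx, hxa (max N k) (le_max_left _ _)]
    exact hΛ a k _ (le_max_right _ _)
  refine ⟨max Λ 0, fun k => ContinuousLinearMap.opNorm_le_bound _ (le_max_right _ _) fun x => ?_⟩
  have hclosed : IsClosed {y : X | ‖basisProj b bstar k y‖ ≤ Λ * ‖y‖} :=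
    isClosed_le (basisProj b bstar k).continuous.norm (continuous_const.mul continuous_norm)
  calc ‖basisProj b bstar k x‖ ≤ Λ * ‖x‖ := closure_minimal (hspan k) hclosed (hdense x)
    _ ≤ max Λ 0 * ‖x‖ := by gcongr; exact le_max_left _ _

theorem sum_apply_smul_biorthogonal_eq_comp (f : X →L[𝕜] 𝕜) (n : ℕ) :
    ∑ i ∈ Finset.range n, f (b i) • bstar i = f.comp (basisProj b bstar n) := by
  ext x
  simp [basisProj_apply, mul_comm]

theorem exists_dual_apply_eq_of_norm_sum_le (hbi : ∀ i j, bstar j (b i) = if i = j then 1 else 0)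
    {c : ℕ → 𝕜} {M : ℝ} (hM : ∀ n, ‖∑ i ∈ Finset.range n, c i • bstar i‖ ≤ M) :
    ∃ φ : X →L[𝕜] 𝕜, ∀ j, φ (b j) = c j := by
  obtain ⟨φ, hφ⟩ := exists_dual_eq_of_tendsto_of_norm_le hM
  refine ⟨φ, fun j => hφ _ _ (tendsto_atTop_of_eventually_const (i₀ := j + 1) fun n hn => ?_)⟩
  rw [sum_smul_biorthogonal_apply hbi, if_pos (by omega)]

theorem exists_bidual_apply_eq_of_norm_sum_le
    (hbi : ∀ i j, bstar j (b i) = if i = j then 1 else 0)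
    {c : ℕ → 𝕜} {M : ℝ} (hM : ∀ n, ‖∑ i ∈ Finset.range n, c i • b i‖ ≤ M) :
    ∃ F : (X →L[𝕜] 𝕜) →L[𝕜] 𝕜, ∀ j, F (bstar j) = c j := by
  obtain ⟨F, hF⟩ := exists_dual_eq_of_tendsto_of_norm_le fun n =>
    (NormedSpace.double_dual_bound 𝕜 X (∑ i ∈ Finset.range n, c i • b i)).trans (hM n)
  refine ⟨F, fun j => hF _ _ (tendsto_atTop_of_eventually_const (i₀ := j + 1) fun n hn => ?_)⟩
  rw [NormedSpace.dual_def, biorthogonal_apply_sum_smul hbi, if_pos (by omega)]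

variable {C : ℝ} (hP : ∀ k, ‖basisProj b bstar k‖ ≤ C)
include hP

theorem norm_sum_apply_smul_biorthogonal_le (f : X →L[𝕜] 𝕜) (n : ℕ) :
    ‖∑ i ∈ Finset.range n, f (b i) • bstar i‖ ≤ C * ‖f‖ := by
  rw [sum_apply_smul_biorthogonal_eq_comp, mul_comm]
  exact (f.opNorm_comp_le _).trans (by gcongr; exact hP n)

theorem norm_sum_dual_apply_smul_le (F : (X →L[𝕜] 𝕜) →L[𝕜] 𝕜) (n : ℕ) :
    ‖∑ i ∈ Finset.range n, F (bstar i) • b i‖ ≤ C * ‖F‖ := by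
  have hC : 0 ≤ C := (norm_nonneg _).trans (hP 0)
  refine NormedSpace.norm_le_dual_bound 𝕜 _ (by positivity) fun f => ?_
  have hswap : f (∑ i ∈ Finset.range n, F (bstar i) • b i) =
      F (∑ i ∈ Finset.range n, f (b i) • bstar i) := by
    simp [map_sum, mul_comm]
  calc ‖f (∑ i ∈ Finset.range n, F (bstar i) • b i)‖
      = ‖F (∑ i ∈ Finset.range n, f (b i) • bstar i)‖ := by rw [hswap]
    _ ≤ ‖F‖ * (C * ‖f‖) := F.le_of_opNorm_le_of_le le_rfl
        (norm_sum_apply_smul_biorthogonal_le hP f n)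
    _ = C * ‖F‖ * ‖f‖ := by ring

theorem isBasicSeq_biorthogonal (hbi : ∀ i j, bstar j (b i) = if i = j then 1 else 0) :
    IsBasicSeq 𝕜 bstar := by
  refine ⟨fun j h => by simpa [h] using hbi j j, C, fun c k n hkn => ?_⟩
  set f := ∑ i ∈ Finset.range n, c i • bstar i
  have hfk : ∑ i ∈ Finset.range k, c i • bstar i = f.comp (basisProj b bstar k) := by
    rw [← sum_apply_smul_biorthogonal_eq_comp]
    refine Finset.sum_congr rfl fun i hi => ?_
    rw [sum_smul_biorthogonal_apply hbi, if_pos (by simp at hi; omega)]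
  rw [hfk, mul_comm]
  exact (f.opNorm_comp_le _).trans (by gcongr; exact hP k)

end Biorthogonal

theorem stronglySumming_iff_biorthogonal_coeffConverging_general {𝕜 : Type*} [RCLike 𝕜]
    {X : Type*} [NormedAddCommGroup X] [NormedSpace 𝕜 X] (b : ℕ → X)
    (hb : IsBasicSeq 𝕜 b)
    (hdense : Dense (Submodule.span 𝕜 (Set.range b) : Set X))
    (bstar : ℕ → X →L[𝕜] 𝕜)
    (hbi : ∀ i j, bstar j (b i) = if i = j then 1 else 0) :
    StronglySumming 𝕜 b ↔ CoeffConverging 𝕜 bstar := by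
  obtain ⟨C, hP⟩ := exists_norm_basisProj_le hb hdense hbi
  constructor
  · rintro ⟨hweak, -, hsum⟩
    refine ⟨isBasicSeq_biorthogonal hP hbi, fun F => ?_, fun c ⟨M, hM⟩ => ?_⟩
    · obtain ⟨l, hl⟩ := hsum (fun j => F (bstar j)) ⟨C * ‖F‖, norm_sum_dual_apply_smul_le hP F⟩
      exact ⟨l, by simpa only [map_sum] using (tendsto_add_atTop_iff_nat 1).mpr hl⟩
    · obtain ⟨φ, hφ⟩ := exists_dual_apply_eq_of_norm_sum_le hbi hM
      obtain ⟨l, hl⟩ := hweak φ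
      exact ⟨l, by simpa only [hφ] using hl⟩
  · rintro ⟨-, hweak, hcoeff⟩
    refine ⟨fun f => hcoeff _ ⟨C * ‖f‖, norm_sum_apply_smul_biorthogonal_le hP f⟩, hb,
      fun c ⟨M, hM⟩ => ?_⟩
    obtain ⟨F, hF⟩ := exists_bidual_apply_eq_of_norm_sum_le hbi hM
    obtain ⟨l, hl⟩ := hweak F
    exact ⟨l, (tendsto_add_atTop_iff_nat 1).mp (by simpa only [map_sum, hF] using hl)⟩

/-- A basic sequence (b_j) spanning the Banach space X = [b_j] is strongly summing iff
its sequence of biorthogonal functionals (b_j^*) in X^* is coefficient converging. -/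
theorem stronglySumming_iff_biorthogonal_coeffConverging {𝕜 : Type*} [RCLike 𝕜]
    {X : Type*} [NormedAddCommGroup X] [NormedSpace 𝕜 X] [CompleteSpace X] (b : ℕ → X)
    (hb : IsBasicSeq 𝕜 b)
    (hdense : Dense (Submodule.span 𝕜 (Set.range b) : Set X))
    (bstar : ℕ → X →L[𝕜] 𝕜)
    (hbi : ∀ i j, bstar j (b i) = if i = j then 1 else 0) :
    StronglySumming 𝕜 b ↔ CoeffConverging 𝕜 bstar :=
  stronglySumming_iff_biorthogonal_coeffConverging_general b hb hdense bstar hbi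
end
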